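/- Under assumptions 0 < a0min ≤ a0 ≤ a0max and τ < 1, with τ_r as defined, the spectrum of P_0⁻¹ P_r (equivalently of I + S̃_r + S̃_r^T) is contained in [1 − τ_r, 1 + τ_r]; in particular λ_min(I + S̃_r + S̃_r^T) ≥ 1 − τ_r > 0. -/

import Mathlib

/-!
The quadratic form of the weighted Gram matrix `(∫ c ⟪W t, W s⟫)_{t,s}` is
`v ↦ ∫ c ‖∑ i, v i • W i‖²`, so it is monotone in the weight `c`. Because `|Y| ≤ 1` and
`∑ |b m| ≤ a0min τr ≤ τr a0` a.e., the weight of `Pr` lies a.e. between `1 ∓ τr` times the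
weight of `P0`, hence `(1 - τr) vᵀP0v ≤ vᵀPrv ≤ (1 + τr) vᵀP0v`. At a generalized eigenvector
`vᵀPrv = λ vᵀP0v` with `vᵀP0v > 0`, which pins `λ` to `[1 - τr, 1 + τr]`.
-/

open MeasureTheory Matrix
open scoped InnerProductSpace

section QuadraticForm

variable {Z ι : Type*} [MeasurableSpace Z] {μ : Measure Z} [Fintype ι]
  {F : Z → Matrix ι ι ℝ}

theorem integrable_dotProduct_mulVec (hF : ∀ i j, Integrable (fun z => F z i j) μ)
    (v w : ι → ℝ) : Integrable (fun z => v ⬝ᵥ F z *ᵥ w) μ := by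
  simp only [dotProduct, mulVec]
  fun_prop

theorem dotProduct_mulVec_integral (hF : ∀ i j, Integrable (fun z => F z i j) μ)
    (v w : ι → ℝ) :
    v ⬝ᵥ (of fun i j => ∫ z, F z i j ∂μ) *ᵥ w = ∫ z, v ⬝ᵥ F z *ᵥ w ∂μ := by
  simp only [dotProduct, mulVec, of_apply]
  rw [integral_finsetSum _ fun i _ => by fun_prop]
  refine Finset.sum_congr rfl fun i _ => ?_
  rw [integral_const_mul, integral_finsetSum _ fun j _ => by fun_prop]
  simp only [integral_mul_const]

theorem dotProduct_smul_gram_mulVec {E : Type*} [NormedAddCommGroup E] [InnerProductSpace ℝ E]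
    (c : ℝ) (w : ι → E) (v : ι → ℝ) :
    v ⬝ᵥ (c • gram ℝ w) *ᵥ v = c * ‖∑ i, v i • w i‖ ^ 2 := by
  rw [smul_mulVec, dotProduct_smul, ← star_trivial v, star_dotProduct_gram_mulVec, star_trivial,
    real_inner_self_eq_norm_sq, smul_eq_mul]

end QuadraticForm

section WeightedGram

variable {Z ι E : Type*} [MeasurableSpace Z] {μ : Measure Z} [Fintype ι]
  [NormedAddCommGroup E] [InnerProductSpace ℝ E] {W : ι → Z → E} {c c' : Z → ℝ}

variable (μ) in
noncomputable def weightedGram (c : Z → ℝ) (W : ι → Z → E) : Matrix ι ι ℝ :=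
  of fun t s => ∫ z, c z * ⟪W t z, W s z⟫_ℝ ∂μ

theorem integrable_mul_norm_sq_sum_smul
    (hc : ∀ t s, Integrable (fun z => c z * ⟪W t z, W s z⟫_ℝ) μ) (v : ι → ℝ) :
    Integrable (fun z => c z * ‖∑ i, v i • W i z‖ ^ 2) μ := by
  simpa only [dotProduct_smul_gram_mulVec] using
    integrable_dotProduct_mulVec (F := fun z => c z • gram ℝ fun i => W i z) hc v v

theorem dotProduct_weightedGram_mulVec
    (hc : ∀ t s, Integrable (fun z => c z * ⟪W t z, W s z⟫_ℝ) μ) (v : ι → ℝ) :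
    v ⬝ᵥ weightedGram μ c W *ᵥ v = ∫ z, c z * ‖∑ i, v i • W i z‖ ^ 2 ∂μ := by
  refine (dotProduct_mulVec_integral (F := fun z => c z • gram ℝ fun i => W i z) hc v v).trans ?_
  simp only [dotProduct_smul_gram_mulVec]

theorem mul_dotProduct_weightedGram_mulVec_le {k : ℝ}
    (hc : ∀ t s, Integrable (fun z => c z * ⟪W t z, W s z⟫_ℝ) μ)
    (hc' : ∀ t s, Integrable (fun z => c' z * ⟪W t z, W s z⟫_ℝ) μ)
    (h : ∀ᵐ z ∂μ, k * c z ≤ c' z) (v : ι → ℝ) :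
    k * (v ⬝ᵥ weightedGram μ c W *ᵥ v) ≤ v ⬝ᵥ weightedGram μ c' W *ᵥ v := by
  rw [dotProduct_weightedGram_mulVec hc, dotProduct_weightedGram_mulVec hc',
    ← integral_const_mul]
  refine integral_mono_ae ((integrable_mul_norm_sq_sum_smul hc v).const_mul k)
    (integrable_mul_norm_sq_sum_smul hc' v) (h.mono fun z hz => ?_)
  dsimp only
  rw [← mul_assoc]
  exact mul_le_mul_of_nonneg_right hz (sq_nonneg _)

theorem dotProduct_weightedGram_mulVec_le_mul {k : ℝ}
    (hc : ∀ t s, Integrable (fun z => c z * ⟪W t z, W s z⟫_ℝ) μ)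
    (hc' : ∀ t s, Integrable (fun z => c' z * ⟪W t z, W s z⟫_ℝ) μ)
    (h : ∀ᵐ z ∂μ, c' z ≤ k * c z) (v : ι → ℝ) :
    v ⬝ᵥ weightedGram μ c' W *ᵥ v ≤ k * (v ⬝ᵥ weightedGram μ c W *ᵥ v) := by
  rw [dotProduct_weightedGram_mulVec hc, dotProduct_weightedGram_mulVec hc',
    ← integral_const_mul]
  refine integral_mono_ae (integrable_mul_norm_sq_sum_smul hc' v)
    ((integrable_mul_norm_sq_sum_smul hc v).const_mul k) (h.mono fun z hz => ?_)
  dsimp only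
  rw [← mul_assoc]
  exact mul_le_mul_of_nonneg_right hz (sq_nonneg _)

end WeightedGram

theorem Matrix.PosDef.generalizedEigenvalue_mem_Icc {ι : Type*} [Fintype ι]
    {P M : Matrix ι ι ℝ} (hP : P.PosDef) {α β lam : ℝ} {v : ι → ℝ} (hv : v ≠ 0)
    (hMv : M *ᵥ v = lam • P *ᵥ v) (hα : α * (v ⬝ᵥ P *ᵥ v) ≤ v ⬝ᵥ M *ᵥ v)
    (hβ : v ⬝ᵥ M *ᵥ v ≤ β * (v ⬝ᵥ P *ᵥ v)) : lam ∈ Set.Icc α β := by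
  have hpos : 0 < v ⬝ᵥ P *ᵥ v := by simpa using hP.dotProduct_mulVec_pos hv
  rw [hMv, dotProduct_smul, smul_eq_mul] at hα hβ
  exact ⟨le_of_mul_le_mul_right hα hpos, le_of_mul_le_mul_right hβ hpos⟩

theorem abs_sum_mul_le_sum_abs {ι : Type*} (s : Finset ι) {b y : ι → ℝ}
    (hy : ∀ m ∈ s, |y m| ≤ 1) : |∑ m ∈ s, b m * y m| ≤ ∑ m ∈ s, |b m| :=
  (Finset.abs_sum_le_sum_abs _ _).trans <| Finset.sum_le_sum fun m hm => by
    rw [abs_mul]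
    exact mul_le_of_le_one_right (abs_nonneg _) (hy m hm)

theorem add_sum_mul_mem_Icc {ι : Type*} {s : Finset ι} {a amin τ : ℝ} {b y : ι → ℝ}
    (ha : amin ≤ a) (hτ : 0 ≤ τ) (hb : ∑ m ∈ s, |b m| ≤ amin * τ)
    (hy : ∀ m ∈ s, |y m| ≤ 1) :
    a + ∑ m ∈ s, b m * y m ∈ Set.Icc ((1 - τ) * a) ((1 + τ) * a) := by
  have hS : |∑ m ∈ s, b m * y m| ≤ τ * a := by
    calc _ ≤ ∑ m ∈ s, |b m| := abs_sum_mul_le_sum_abs s hy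
      _ ≤ amin * τ := hb
      _ ≤ τ * a := by rw [mul_comm]; exact mul_le_mul_of_nonneg_left ha hτ
  rw [abs_le] at hS
  constructor <;> linarith [hS.1, hS.2]

/-- `b m` is the expansion coefficient `a_{m+1}`, `Y y m` the `m`-th coordinate of
`y ∈ [-1,1]^ℕ`, and `W t` the spatial gradient of the `t`-th Galerkin basis function. -/
theorem mean_based_truncation_spectrum_general
    {Ω Γ : Type*} [MeasurableSpace Ω] [MeasurableSpace Γ]
    (μ : Measure Ω) (ν : Measure Γ) {d N : ℕ} (r : ℕ)
    (p : Γ → ℝ) (hp : ∀ y, 0 ≤ p y)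
    (Y : Γ → ℕ → ℝ) (hY : ∀ᵐ y ∂ν, ∀ m, |Y y m| ≤ 1)
    (a0 : Ω → ℝ) (b : ℕ → Ω → ℝ) (a0min a0max τ τr : ℝ)
    (ha0 : ∀ᵐ x ∂μ, a0min ≤ a0 x ∧ a0 x ≤ a0max)
    (hτr : ∀ᵐ x ∂μ, (∑ m ∈ Finset.range r, |b m x|) ≤ a0min * τr)
    (hτr0 : 0 ≤ τr) (hτrτ : τr ≤ τ) (hτ1 : τ < 1)
    (W : Fin N → Ω × Γ → EuclideanSpace ℝ (Fin d))
    (P0 Pr : Matrix (Fin N) (Fin N) ℝ)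
    (hP0 : ∀ t s, P0 t s =
      ∫ z, p z.2 * (a0 z.1 * (inner ℝ (W s z) (W t z) : ℝ)) ∂(μ.prod ν))
    (hPr : ∀ t s, Pr t s =
      ∫ z, p z.2 * ((a0 z.1 + ∑ m ∈ Finset.range r, b m z.1 * Y z.2 m) *
        (inner ℝ (W s z) (W t z) : ℝ)) ∂(μ.prod ν))
    (hI0 : ∀ t s, Integrable
      (fun z => p z.2 * (a0 z.1 * (inner ℝ (W s z) (W t z) : ℝ))) (μ.prod ν))
    (hIr : ∀ t s, Integrable
      (fun z => p z.2 * ((a0 z.1 + ∑ m ∈ Finset.range r, b m z.1 * Y z.2 m) *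
        (inner ℝ (W s z) (W t z) : ℝ))) (μ.prod ν))
    (hP0pd : P0.PosDef) :
    (∀ (lam : ℝ) (v : Fin N → ℝ), v ≠ 0 → Pr.mulVec v = lam • P0.mulVec v →
      1 - τr ≤ lam ∧ lam ≤ 1 + τr) ∧
    0 < 1 - τr := by
  refine ⟨fun lam v hv hMv => ?_, by linarith⟩
  set c0 : Ω × Γ → ℝ := fun z => p z.2 * a0 z.1
  set cr : Ω × Γ → ℝ := fun z => p z.2 * (a0 z.1 + ∑ m ∈ Finset.range r, b m z.1 * Y z.2 m)
  have hP0W : P0 = weightedGram (μ.prod ν) c0 W := by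
    ext t s; simp only [hP0, weightedGram, of_apply, c0, mul_assoc, real_inner_comm]
  have hPrW : Pr = weightedGram (μ.prod ν) cr W := by
    ext t s; simp only [hPr, weightedGram, of_apply, cr, mul_assoc, real_inner_comm]
  have hc0 : ∀ t s, Integrable (fun z => c0 z * ⟪W t z, W s z⟫_ℝ) (μ.prod ν) := by
    simpa only [c0, mul_assoc, real_inner_comm] using hI0
  have hcr : ∀ t s, Integrable (fun z => cr z * ⟪W t z, W s z⟫_ℝ) (μ.prod ν) := by
    simpa only [cr, mul_assoc, real_inner_comm] using hIr
  have hweight : ∀ᵐ z ∂μ.prod ν, cr z ∈ Set.Icc ((1 - τr) * c0 z) ((1 + τr) * c0 z) := by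
    filter_upwards [Measure.quasiMeasurePreserving_fst.ae (ha0.and hτr),
      Measure.quasiMeasurePreserving_snd.ae hY] with z ⟨⟨ha, _⟩, hb⟩ hy
    obtain ⟨hlow, hup⟩ := add_sum_mul_mem_Icc ha hτr0 hb fun m _ => hy m
    simp only [c0, cr, mul_left_comm _ (p z.2)]
    exact ⟨mul_le_mul_of_nonneg_left hlow (hp _), mul_le_mul_of_nonneg_left hup (hp _)⟩
  subst hP0W hPrW
  exact hP0pd.generalizedEigenvalue_mem_Icc hv hMv
    (mul_dotProduct_weightedGram_mulVec_le hc0 hcr (hweight.mono fun _ h => h.1) v)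
    (dotProduct_weightedGram_mulVec_le_mul hc0 hcr (hweight.mono fun _ h => h.2) v)

/-- The spectrum of `P0⁻¹ P_r` is contained in `[1 − τ_r, 1 + τ_r]`, where `P0` is
the mean-based preconditioner and `P_r` the truncation preconditioner: every
generalized eigenvalue `λ` of the pencil `(P_r, P0)` satisfies
`1 − τ_r ≤ λ ≤ 1 + τ_r`, and `1 − τ_r > 0`.  Here `b m` plays the role of the
expansion coefficient `a_{m+1}`, `Y y m` the `m`-th coordinate of `y ∈ [-1,1]^ℕ`,
and `W t` represents the spatial gradient of the `t`-th Galerkin basis function. -/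
theorem mean_based_truncation_spectrum
    {Ω Γ : Type*} [MeasurableSpace Ω] [MeasurableSpace Γ]
    (μ : Measure Ω) (ν : Measure Γ) {d N : ℕ} (r : ℕ)
    (p : Γ → ℝ) (hp : ∀ y, 0 ≤ p y)
    (Y : Γ → ℕ → ℝ) (hY : ∀ᵐ y ∂ν, ∀ m, |Y y m| ≤ 1)
    (a0 : Ω → ℝ) (b : ℕ → Ω → ℝ) (a0min a0max τ τr : ℝ)
    (ha0min : 0 < a0min)
    (ha0 : ∀ᵐ x ∂μ, a0min ≤ a0 x ∧ a0 x ≤ a0max)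
    (hτr : ∀ᵐ x ∂μ, (∑ m ∈ Finset.range r, |b m x|) ≤ a0min * τr)
    (hτr0 : 0 ≤ τr) (hτrτ : τr ≤ τ) (hτ1 : τ < 1)
    (W : Fin N → Ω × Γ → EuclideanSpace ℝ (Fin d))
    (P0 Pr : Matrix (Fin N) (Fin N) ℝ)
    (hP0 : ∀ t s, P0 t s =
      ∫ z, p z.2 * (a0 z.1 * (inner ℝ (W s z) (W t z) : ℝ)) ∂(μ.prod ν))
    (hPr : ∀ t s, Pr t s =
      ∫ z, p z.2 * ((a0 z.1 + ∑ m ∈ Finset.range r, b m z.1 * Y z.2 m) *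
        (inner ℝ (W s z) (W t z) : ℝ)) ∂(μ.prod ν))
    (hI0 : ∀ t s, Integrable
      (fun z => p z.2 * (a0 z.1 * (inner ℝ (W s z) (W t z) : ℝ))) (μ.prod ν))
    (hIr : ∀ t s, Integrable
      (fun z => p z.2 * ((a0 z.1 + ∑ m ∈ Finset.range r, b m z.1 * Y z.2 m) *
        (inner ℝ (W s z) (W t z) : ℝ))) (μ.prod ν))
    (hP0pd : P0.PosDef) :
    (∀ (lam : ℝ) (v : Fin N → ℝ), v ≠ 0 → Pr.mulVec v = lam • P0.mulVec v →
      1 - τr ≤ lam ∧ lam ≤ 1 + τr) ∧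
    0 < 1 - τr :=
  mean_based_truncation_spectrum_general μ ν r p hp Y hY a0 b a0min a0max τ τr ha0 hτr hτr0 hτrτ hτ1
    W P0 Pr hP0 hPr hI0 hIr hP0pd
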